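/- Let M ∈ C^{n×n} be diagonalizable with M = Σ_i λ_i v_i w_i*, fix s ∈ C \ Spec(M), and let u ∈ C^n be such that u* v_i ≠ 0 for every i whose eigenvalue attains dist(s, Spec M). Then lim_{m→∞} ‖u*(s - M)^{-m}‖^{-1/m} = dist(s, Spec(M)). -/

import Mathlib

open Matrix

/-- Operator (ℓ²→ℓ²) norm of a complex matrix. -/
noncomputable def opNorm {m : Type*} [Fintype m] [DecidableEq m] (M : Matrix m m ℂ) : ℝ :=
  ‖LinearMap.toContinuousLinearMap (Matrix.toEuclideanLin M)‖

/-- Eigenvector condition number: infimum of `‖V‖‖V⁻¹‖` over diagonalizations `M = VDV⁻¹`. -/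
noncomputable def kappaV {n : ℕ} (M : Matrix (Fin n) (Fin n) ℂ) : ℝ :=
  sInf {x | ∃ V D : Matrix (Fin n) (Fin n) ℂ,
    IsUnit V ∧ D.IsDiag ∧ M = V * D * V⁻¹ ∧ x = opNorm V * opNorm V⁻¹}

/-- ℓ² norm of a vector. -/
noncomputable def vecNorm {n : ℕ} (x : Fin n → ℂ) : ℝ := Real.sqrt (∑ i, ‖x i‖ ^ 2)

/-!
After diagonalising, `u*(s - M)^{-m} = Σ_i (u* v_i) (s - λ_i)^{-m} w_i*`. With
`d = dist(s, Spec M) = |s - λ_{i₀}|`, the rescaled coefficient vector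
`((u* v_i) (d / (s - λ_i))^m)_i` has entries bounded by `|u* v_i|` and its `i₀`-th entry of
constant modulus `|u* v_{i₀}| ≠ 0`. Since `V` is invertible, `d^m ‖u*(s - M)^{-m}‖` is therefore
bounded above and away from zero, so its `m`-th root tends to `1`.
-/

open Filter Topology

lemma tendsto_rpow_neg_one_div_of_mem_Icc {y : ℕ → ℝ} {a b : ℝ} (ha : 0 < a)
    (hy : ∀ m, y m ∈ Set.Icc a b) :
    Tendsto (fun m : ℕ => y m ^ (-(1 : ℝ) / (m : ℝ))) atTop (𝓝 1) := by
  have hexp : Tendsto (fun m : ℕ => -(1 : ℝ) / (m : ℝ)) atTop (𝓝 0) :=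
    tendsto_const_div_atTop_nhds_zero_nat (-1)
  have hconst : ∀ c : ℝ, 0 < c → Tendsto (fun m : ℕ => c ^ (-(1 : ℝ) / (m : ℝ))) atTop (𝓝 1) :=
    fun c hc => by simpa using tendsto_const_nhds.rpow hexp (Or.inl hc.ne')
  have hnonpos : ∀ m : ℕ, -(1 : ℝ) / (m : ℝ) ≤ 0 := fun m =>
    div_nonpos_of_nonpos_of_nonneg (by norm_num) m.cast_nonneg
  refine tendsto_of_tendsto_of_tendsto_of_le_of_le
    (hconst b (ha.trans_le ((hy 0).1.trans (hy 0).2))) (hconst a ha) (fun m => ?_) (fun m => ?_)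
  · exact Real.rpow_le_rpow_of_nonpos (ha.trans_le (hy m).1) (hy m).2 (hnonpos m)
  · exact Real.rpow_le_rpow_of_nonpos ha (hy m).1 (hnonpos m)

lemma tendsto_rpow_neg_one_div_of_mul_pow_mem_Icc {F : ℕ → ℝ} {d a b : ℝ} (hd : 0 < d)
    (ha : 0 < a) (hF : ∀ m, F m * d ^ m ∈ Set.Icc a b) :
    Tendsto (fun m : ℕ => F m ^ (-(1 : ℝ) / (m : ℝ))) atTop (𝓝 d) := by
  have hlim := (tendsto_rpow_neg_one_div_of_mem_Icc ha hF).mul_const d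
  rw [one_mul] at hlim
  refine hlim.congr' ?_
  filter_upwards [eventually_ne_atTop 0] with m hm
  have hFm : 0 ≤ F m := nonneg_of_mul_nonneg_left (ha.le.trans (hF m).1) (by positivity)
  have hdm : (d ^ m) ^ (-(1 : ℝ) / (m : ℝ)) * d = 1 := by
    rw [← Real.rpow_natCast, ← Real.rpow_mul hd.le, mul_div_cancel₀ _ (Nat.cast_ne_zero.mpr hm),
      Real.rpow_neg_one, inv_mul_cancel₀ hd.ne']
  rw [Real.mul_rpow hFm (by positivity), mul_assoc, hdm, mul_one]

section VecNorm

variable {n : ℕ}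

lemma vecNorm_eq_norm (x : Fin n → ℂ) : vecNorm x = ‖WithLp.toLp 2 x‖ := by
  rw [EuclideanSpace.norm_eq]; rfl

lemma vecNorm_nonneg (x : Fin n → ℂ) : 0 ≤ vecNorm x := Real.sqrt_nonneg _

lemma norm_apply_le_vecNorm (x : Fin n → ℂ) (i : Fin n) : ‖x i‖ ≤ vecNorm x := by
  rw [vecNorm_eq_norm]; exact PiLp.norm_apply_le (WithLp.toLp 2 x) i

lemma vecNorm_le_vecNorm_of_norm_le {x y : Fin n → ℂ} (h : ∀ i, ‖x i‖ ≤ ‖y i‖) : vecNorm x ≤ vecNorm y :=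
  Real.sqrt_le_sqrt <| Finset.sum_le_sum fun i _ => pow_le_pow_left₀ (norm_nonneg _) (h i) 2

lemma vecNorm_smul (a : ℂ) (x : Fin n → ℂ) : vecNorm (a • x) = ‖a‖ * vecNorm x := by
  rw [vecNorm_eq_norm, vecNorm_eq_norm, WithLp.toLp_smul, norm_smul]

lemma vecNorm_vecMul_le (x : Fin n → ℂ) (A : Matrix (Fin n) (Fin n) ℂ) :
    vecNorm (x ᵥ* A) ≤ opNorm Aᵀ * vecNorm x := by
  rw [vecNorm_eq_norm, vecNorm_eq_norm, ← mulVec_transpose]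
  exact (LinearMap.toContinuousLinearMap (toEuclideanLin Aᵀ)).le_opNorm _

end VecNorm

namespace Matrix

variable {ι 𝕜 : Type*} [Fintype ι] [DecidableEq ι] [Field 𝕜] {V : Matrix ι ι 𝕜}

lemma inv_conj (hV : IsUnit V) (B : Matrix ι ι 𝕜) : (V * B * V⁻¹)⁻¹ = V * B⁻¹ * V⁻¹ := by
  rw [Matrix.mul_inv_rev, Matrix.mul_inv_rev,
    nonsing_inv_nonsing_inv V ((isUnit_iff_isUnit_det V).mp hV), mul_assoc]

lemma conj_pow (hV : IsUnit V) (B : Matrix ι ι 𝕜) (m : ℕ) :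
    (V * B * V⁻¹) ^ m = V * B ^ m * V⁻¹ := by
  obtain ⟨U, rfl⟩ := hV
  rw [← coe_units_inv]
  exact Units.conj_pow U B m

lemma smul_one_sub_conj (hV : IsUnit V) (B : Matrix ι ι 𝕜) (s : 𝕜) :
    s • 1 - V * B * V⁻¹ = V * (s • 1 - B) * V⁻¹ := by
  rw [mul_sub, sub_mul, mul_smul_one, smul_mul_assoc,
    mul_nonsing_inv V ((isUnit_iff_isUnit_det V).mp hV)]

lemma spectrum_conj (hV : IsUnit V) (B : Matrix ι ι 𝕜) :
    spectrum 𝕜 (V * B * V⁻¹) = spectrum 𝕜 B := by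
  obtain ⟨U, rfl⟩ := hV
  rw [← coe_units_inv, spectrum.units_conjugate]

lemma inv_diagonal_of_ne_zero {g : ι → 𝕜} (hg : ∀ i, g i ≠ 0) :
    (diagonal g)⁻¹ = diagonal g⁻¹ :=
  inv_eq_left_inv <| by
    rw [diagonal_mul_diagonal, ← diagonal_one]
    exact congrArg diagonal (funext fun i => inv_mul_cancel₀ (hg i))

lemma inv_smul_one_sub_conj_diagonal_pow (hV : IsUnit V) {f : ι → 𝕜} {s : 𝕜} (hs : ∀ i, s ≠ f i)
    (m : ℕ) :
    ((s • 1 - V * diagonal f * V⁻¹)⁻¹) ^ m = V * diagonal (fun i => (s - f i)⁻¹ ^ m) * V⁻¹ := by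
  rw [smul_one_sub_conj hV, inv_conj hV, conj_pow hV, smul_one_eq_diagonal, diagonal_sub,
    inv_diagonal_of_ne_zero fun i => sub_ne_zero.mpr (hs i), diagonal_pow]
  rfl

end Matrix

lemma tendsto_vecNorm_vecMul_inv_pow_rpow {n : ℕ} {V : Matrix (Fin n) (Fin n) ℂ} (hV : IsUnit V)
    {c g : Fin n → ℂ} {i₀ : Fin n} (hg₀ : g i₀ ≠ 0) (hmin : ∀ i, ‖g i₀‖ ≤ ‖g i‖)
    (hc : c i₀ ≠ 0) :
    Tendsto (fun m : ℕ => vecNorm ((fun i => c i * (g i)⁻¹ ^ m) ᵥ* V⁻¹) ^ (-(1 : ℝ) / (m : ℝ)))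
      atTop (𝓝 ‖g i₀‖) := by
  set d := ‖g i₀‖
  have hd : 0 < d := norm_pos_iff.mpr hg₀
  set x : ℕ → Fin n → ℂ := fun m i => c i * ((d : ℂ) / g i) ^ m
  have hscale : ∀ m, vecNorm ((fun i => c i * (g i)⁻¹ ^ m) ᵥ* V⁻¹) * d ^ m
      = vecNorm (x m ᵥ* V⁻¹) := fun m => by
    have hxm : x m = ((d ^ m : ℝ) : ℂ) • fun i => c i * (g i)⁻¹ ^ m := by
      funext i
      simp only [x, Pi.smul_apply, smul_eq_mul, Complex.ofReal_pow, div_eq_mul_inv, mul_pow]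
      ring
    rw [hxm, smul_vecMul, vecNorm_smul, Complex.norm_real, Real.norm_of_nonneg (by positivity),
      mul_comm]
  have hx_le : ∀ m, vecNorm (x m) ≤ vecNorm c := fun m => vecNorm_le_vecNorm_of_norm_le fun i => by
    rw [norm_mul, norm_pow, norm_div, Complex.norm_real, Real.norm_of_nonneg hd.le]
    exact mul_le_of_le_one_right (norm_nonneg _)
      (pow_le_one₀ (by positivity) ((div_le_one (hd.trans_le (hmin i))).mpr (hmin i)))
  have hx₀ : ∀ m, ‖c i₀‖ ≤ vecNorm (x m) := fun m => by
    convert norm_apply_le_vecNorm (x m) i₀ using 1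
    rw [norm_mul, norm_pow, norm_div, Complex.norm_real, Real.norm_of_nonneg hd.le,
      div_self hd.ne', one_pow, mul_one]
  have hlow : ∀ m, ‖c i₀‖ ≤ opNorm Vᵀ * vecNorm (x m ᵥ* V⁻¹) := fun m => by
    have hxV : x m ᵥ* V⁻¹ ᵥ* V = x m := by
      rw [vecMul_vecMul, nonsing_inv_mul V ((isUnit_iff_isUnit_det V).mp hV), vecMul_one]
    have h := vecNorm_vecMul_le (x m ᵥ* V⁻¹) V
    rw [hxV] at h
    exact (hx₀ m).trans h
  have hc' : 0 < ‖c i₀‖ := norm_pos_iff.mpr hc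
  have hop : 0 < opNorm Vᵀ :=
    pos_of_mul_pos_left (hc'.trans_le (hlow 0)) (vecNorm_nonneg _)
  refine tendsto_rpow_neg_one_div_of_mul_pow_mem_Icc (b := opNorm V⁻¹ᵀ * vecNorm c) hd
    (div_pos hc' hop) fun m => ?_
  rw [hscale]
  refine ⟨(div_le_iff₀' hop).mpr (hlow m), ?_⟩
  exact (vecNorm_vecMul_le _ _).trans (mul_le_mul_of_nonneg_left (hx_le m) (norm_nonneg _))

/-- unshifted inverse iteration computes the distance to the spectrum.
Let `M = V D V⁻¹ = Σ λ_i v_i w_i*` (so `v_i` are the columns of `V` and `w_i*` the rows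
of `V⁻¹`), `s ∉ Spec M`, and `u ∈ ℂⁿ` with `u* v_i ≠ 0` for every `i` whose eigenvalue
attains `dist(s, Spec M)`. Then `‖u*(s - M)^{-m}‖^{-1/m} → dist(s, Spec M)` as `m → ∞`. -/
theorem stmt_12 (n : ℕ) (hn : 0 < n) (M V D : Matrix (Fin n) (Fin n) ℂ)
    (hV : IsUnit V) (hD : D.IsDiag) (hM : M = V * D * V⁻¹)
    (s : ℂ) (hs : s ∉ spectrum ℂ M)
    (u : Fin n → ℂ)
    (hu : ∀ i : Fin n, ‖s - D i i‖ = Metric.infDist s (spectrum ℂ M) →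
      (∑ k, (starRingEnd ℂ) (u k) * V k i) ≠ 0) :
    Filter.Tendsto (fun m : ℕ =>
        (vecNorm (Matrix.vecMul (fun k => (starRingEnd ℂ) (u k))
          (((s • (1 : Matrix (Fin n) (Fin n) ℂ) - M)⁻¹) ^ m))) ^ (-(1 : ℝ) / (m : ℝ)))
      Filter.atTop (nhds (Metric.infDist s (spectrum ℂ M))) := by
  have : Nonempty (Fin n) := Fin.pos_iff_nonempty.mp hn
  rw [← hD.diagonal_diag] at hM
  have hspec : spectrum ℂ M = Set.range D.diag := by
    rw [hM, spectrum_conj hV, spectrum_diagonal]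
  obtain ⟨_, ⟨i₀, rfl⟩, hi₀⟩ := (Set.finite_range D.diag).isCompact.exists_infDist_eq_dist
    (Set.range_nonempty _) s
  rw [← hspec, Complex.dist_eq, diag_apply] at hi₀
  have hmin : ∀ i, ‖s - D i₀ i₀‖ ≤ ‖s - D i i‖ := fun i => by
    have h := Metric.infDist_le_dist_of_mem (x := s)
      (show D i i ∈ spectrum ℂ M from hspec ▸ Set.mem_range_self i)
    rwa [hi₀, Complex.dist_eq] at h
  have hsD : ∀ i, s ≠ D i i := fun i h => hs (hspec ▸ ⟨i, h.symm⟩)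
  have hseq : ∀ m : ℕ, (fun k => (starRingEnd ℂ) (u k)) ᵥ* ((s • 1 - M)⁻¹ ^ m)
      = (fun i => ((fun k => (starRingEnd ℂ) (u k)) ᵥ* V) i * (s - D i i)⁻¹ ^ m) ᵥ* V⁻¹ :=
    fun m => by
      rw [hM, inv_smul_one_sub_conj_diagonal_pow hV (f := D.diag) hsD, ← vecMul_vecMul,
        ← vecMul_vecMul]
      exact congrArg (· ᵥ* V⁻¹) (funext fun i => vecMul_diagonal _ _ i)
  simp_rw [hseq, hi₀]
  exact tendsto_vecNorm_vecMul_inv_pow_rpow hV (sub_ne_zero.mpr (hsD i₀)) hmin (hu i₀ hi₀.symm)
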